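/- arXiv:math/0402262 — 3 statements merged into one kernel-verified Lean document; each statement's English description precedes it below -/
import Mathlib

section
/- Let ω = √(1−ε) with 0 < ε small, and let (ω̃_m)_{m≥1} satisfy |ω̃_m − |m|| ≤ C₁ε/|m| for some constant C₁ > 0. If nonzero integers n, m with |n| ≠ |m| satisfy ||ω n| − ω̃_m| ≤ C₀ < 1/2, then |n| ≥ 1/(2ε) and |m| > 1/(2ε). -/
/-!
Write `w = √(1 - ε)`, `N = |n|`, `M = |m|`. The two hypotheses give `|w N - M| ≤ C₀ + C₁ ε < 1/2`.
Since `w ≤ 1` and the distinct integers `N`, `M` differ by at least `1`, this forces `N ≥ M + 1`,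
hence `(1 - w) N ≥ 1/2`; and `1 - w = ε / (1 + w)` turns this into `ε N ≥ (1 + w) / 2`, so `N`
and `M ≈ w N` are of size `1/ε`.
-/

lemma Int.cast_abs_add_one_le_or_of_abs_ne {n m : ℤ} (h : |n| ≠ |m|) :
    |(m : ℝ)| + 1 ≤ |(n : ℝ)| ∨ |(n : ℝ)| + 1 ≤ |(m : ℝ)| := by
  rcases h.lt_or_gt with h | h
  · right; exact_mod_cast Int.add_one_le_of_lt h
  · left; exact_mod_cast Int.add_one_le_of_lt h

lemma one_sub_sqrt_one_sub_mul_one_add {ε : ℝ} (hε : ε ≤ 1) :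
    (1 - √(1 - ε)) * (1 + √(1 - ε)) = ε := by
  have := Real.sq_sqrt (sub_nonneg.mpr hε)
  linear_combination -this

section Resonance

variable {ε w η N M : ℝ}

lemma add_one_le_of_abs_mul_sub_lt_one (hw : w ≤ 1) (hN : 0 ≤ N)
    (hsep : M + 1 ≤ N ∨ N + 1 ≤ M) (hres : |w * N - M| < 1) : M + 1 ≤ N := by
  refine hsep.resolve_right fun hNM => ?_
  have : w * N ≤ N := mul_le_of_le_one_left hN hw
  linarith [(abs_lt.mp hres).1]

lemma one_sub_le_one_sub_mul_of_abs_mul_sub_le (hgap : M + 1 ≤ N) (hres : |w * N - M| ≤ η) :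
    1 - η ≤ (1 - w) * N := by
  linarith [(abs_le.mp hres).2]

lemma one_div_two_mul_le_and_lt_of_abs_mul_sub_le (hε : 0 < ε) (hε4 : ε < 1 / 4)
    (hw0 : 0 ≤ w) (hwε : (1 - w) * (1 + w) = ε) (hη : η < 1 / 2)
    (hgap : M + 1 ≤ N) (hres : |w * N - M| ≤ η) :
    1 / (2 * ε) ≤ N ∧ 1 / (2 * ε) < M := by
  have hη0 : 0 ≤ η := (abs_nonneg _).trans hres
  have hw1 : w ≤ 1 := by nlinarith
  have hw : 1 - ε ≤ w := by nlinarith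
  have hεN : (1 + w) * (1 - η) ≤ ε * N := by
    calc (1 + w) * (1 - η) ≤ (1 + w) * ((1 - w) * N) := by
          gcongr
          exact one_sub_le_one_sub_mul_of_abs_mul_sub_le hgap hres
      _ = ε * N := by rw [← hwε]; ring
  have hM : w * N - η ≤ M := by linarith [(abs_le.mp hres).2]
  -- `w (1 + w) ≥ (1 - ε) (2 - ε) > (3/4) (7/4)`, and then `εM > (21/16) (1/2) - ε η > 1/2`
  have hw2 : 21 / 16 < w * (1 + w) := by nlinarith
  constructor
  · rw [div_le_iff₀ (by positivity)]
    nlinarith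
  · rw [div_lt_iff₀ (by positivity)]
    calc 1 < 2 * (w * ((1 + w) * (1 - η)) - ε * η) := by nlinarith
      _ ≤ 2 * (w * (ε * N) - ε * η) := by gcongr
      _ = 2 * ε * (w * N - η) := by ring
      _ ≤ M * (2 * ε) := by rw [mul_comm M]; gcongr

end Resonance

theorem small_divisor_localization_general
    (C₀ C₁ : ℝ) (hC₀' : C₀ < 1/2) (hC₁ : 0 < C₁) :
    ∃ ε₀ > (0:ℝ), ∀ ε : ℝ, 0 < ε → ε < ε₀ →
      ∀ ω' : ℤ → ℝ, (∀ m : ℤ, m ≠ 0 → abs (ω' m - |(m:ℝ)|) ≤ C₁ * ε / |(m:ℝ)|) →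
      ∀ n m : ℤ, n ≠ 0 → m ≠ 0 → |n| ≠ |m| →
        |(|Real.sqrt (1 - ε) * (n:ℝ)|) - ω' m| ≤ C₀ →
        1 / (2*ε) ≤ |(n:ℝ)| ∧ 1 / (2*ε) < |(m:ℝ)| := by
  have hC₀half : 0 < 1 / 2 - C₀ := by linarith
  refine ⟨min (1 / 4) ((1 / 2 - C₀) / C₁), by positivity, ?_⟩
  intro ε hε hεε₀ ω' hω' n m _ hm hnm hdiv
  have hε4 : ε < 1 / 4 := hεε₀.trans_le (min_le_left _ _)
  have hη : C₀ + C₁ * ε < 1 / 2 := by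
    have := (lt_div_iff₀' hC₁).mp (hεε₀.trans_le (min_le_right _ _))
    linarith
  have hm1 : (1 : ℝ) ≤ |(m : ℝ)| := by exact_mod_cast Int.one_le_abs hm
  have hω'm : abs (ω' m - |(m : ℝ)|) ≤ C₁ * ε :=
    (hω' m hm).trans (div_le_self (by positivity) hm1)
  have hres : abs (√(1 - ε) * |(n : ℝ)| - |(m : ℝ)|) ≤ C₀ + C₁ * ε := by
    rw [← abs_of_nonneg (Real.sqrt_nonneg (1 - ε)), ← abs_mul]
    exact (abs_sub_le _ (ω' m) _).trans (add_le_add hdiv hω'm)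
  have hsep := Int.cast_abs_add_one_le_or_of_abs_ne hnm
  have hlarger := add_one_le_of_abs_mul_sub_lt_one (Real.sqrt_le_one.mpr (by linarith))
    (abs_nonneg _) hsep (hres.trans_lt (by linarith))
  exact one_div_two_mul_le_and_lt_of_abs_mul_sub_le hε hε4 (Real.sqrt_nonneg _)
    (one_sub_sqrt_one_sub_mul_one_add (by linarith)) hη hlarger hres

theorem small_divisor_localization
    (C₀ C₁ : ℝ) (hC₀ : 0 < C₀) (hC₀' : C₀ < 1/2) (hC₁ : 0 < C₁) :
    ∃ ε₀ > (0:ℝ), ∀ ε : ℝ, 0 < ε → ε < ε₀ →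
      ∀ ω' : ℤ → ℝ, (∀ m : ℤ, m ≠ 0 → abs (ω' m - |(m:ℝ)|) ≤ C₁ * ε / |(m:ℝ)|) →
      ∀ n m : ℤ, n ≠ 0 → m ≠ 0 → |n| ≠ |m| →
        |(|Real.sqrt (1 - ε) * (n:ℝ)|) - ω' m| ≤ C₀ →
        1 / (2*ε) ≤ |(n:ℝ)| ∧ 1 / (2*ε) < |(m:ℝ)| :=
  small_divisor_localization_general C₀ C₁ hC₀' hC₁
end

section
/- Let ω > 0, let (ω̃_m)_{m∈ℤ∖{0}} be even in m (ω̃_{−m} = ω̃_m), and suppose the second Melnikov conditions |ωn ± (ω̃_m ± ω̃_{m'})| ≥ C₀|n|^{−τ} hold for all n ≠ 0 and all m, m' ≠ 0 with |n| ≠ |m ± m'|. If nonzero integers n_ℓ, m_ℓ, n_{ℓ₁}, m_{ℓ₁} satisfy n_ℓ ≠ n_{ℓ₁}, |n_ℓ − n_{ℓ₁}| ≠ |m_ℓ ± m_{ℓ₁}| (both signs), ||ωn_ℓ| − ω̃_{m_ℓ}| ≤ 2^{−h+1}C₀ and ||ωn_{ℓ₁}| − ω̃_{m_{ℓ₁}}|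 ≤ 2^{−h+1}C₀, then |n_ℓ − n_{ℓ₁}| ≥ (2^{h−2})^{1/τ}. -/
/-! Removing the absolute value in `|ω n| ≈ ω̃_m` costs a sign `s = ±1` for each of the two
resonances. Subtracting the two signed approximations gives a small divisor
`ω (n_ℓ - n_{ℓ₁}) + σ (ω̃_{m_ℓ} + σ' ω̃_{m_{ℓ₁}})` of size at most `2^{-h+2} C₀`, while the second
Melnikov condition bounds it below by `C₀ |n_ℓ - n_{ℓ₁}|^{-τ}`; solving for `|n_ℓ - n_{ℓ₁}|`
gives the separation. -/

lemma Int.neg_eq_one_or_neg_one {s : ℤ} (hs : s = 1 ∨ s = -1) : -s = 1 ∨ -s = -1 := by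
  rcases hs with rfl | rfl <;> simp

lemma Int.mul_eq_one_or_neg_one {s t : ℤ} (hs : s = 1 ∨ s = -1) (ht : t = 1 ∨ t = -1) :
    s * t = 1 ∨ s * t = -1 := by
  rcases hs with rfl | rfl <;> rcases ht with rfl | rfl <;> simp

lemma Int.ne_abs_add_mul_of_ne_abs_add_of_ne_abs_sub {k a b s : ℤ} (hs : s = 1 ∨ s = -1)
    (hadd : k ≠ |a + b|) (hsub : k ≠ |a - b|) : k ≠ |a + s * b| := by
  rcases hs with rfl | rfl
  · simpa using hadd
  · simpa [← sub_eq_add_neg] using hsub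

lemma exists_sign_abs_sub_mul_le {x a ε : ℝ} (h : |(|x| - a)| ≤ ε) :
    ∃ s : ℤ, (s = 1 ∨ s = -1) ∧ |x - s * a| ≤ ε := by
  rcases le_or_gt 0 x with hx | hx
  · exact ⟨1, Or.inl rfl, by simpa [abs_of_nonneg hx] using h⟩
  · refine ⟨-1, Or.inr rfl, ?_⟩
    rw [abs_of_neg hx] at h
    rw [← abs_neg]
    convert h using 2
    push_cast
    ring

/-- With `σ = -s` and `σ' = -s' s` (so that `σ σ' = s'`), the Melnikov divisor is the
difference of the two signed approximations. -/
lemma abs_mul_sub_add_neg_mul_le {ω x y a b ε : ℝ} {s s' : ℤ} (hs : s = 1 ∨ s = -1)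
    (hx : |ω * x - s * a| ≤ ε) (hy : |ω * y - s' * b| ≤ ε) :
    |ω * (x - y) + ((-s : ℤ) : ℝ) * (a + ((-(s' * s) : ℤ) : ℝ) * b)| ≤ 2 * ε := by
  have hss : (s : ℝ) * s = 1 := by rcases hs with rfl | rfl <;> norm_num
  calc |ω * (x - y) + ((-s : ℤ) : ℝ) * (a + ((-(s' * s) : ℤ) : ℝ) * b)|
      = |(ω * x - s * a) - (ω * y - s' * b)| := by
        push_cast
        congr 1
        linear_combination ((s' : ℝ) * b) * hss
    _ ≤ |ω * x - s * a| + |ω * y - s' * b| := abs_sub _ _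
    _ ≤ 2 * ε := by linarith

lemma rpow_one_div_le_of_mul_rpow_neg_le {c τ N A : ℝ} (hc : 0 < c) (hτ : 0 < τ) (hN : 0 < N)
    (hA : 0 < A) (h : c * N ^ (-τ) ≤ c / A) : A ^ (1 / τ) ≤ N := by
  have hinv : (N ^ τ)⁻¹ ≤ A⁻¹ := by
    rw [← Real.rpow_neg hN.le]
    exact le_of_mul_le_mul_left (by rwa [← div_eq_mul_inv]) hc
  rw [one_div, Real.rpow_inv_le_iff_of_pos hA.le hN.le hτ]
  exact (inv_le_inv₀ (Real.rpow_pos_of_pos hN τ) hA).mp hinv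

theorem second_melnikov_separation_general (ω C₀ τ : ℝ) (hC₀ : 0 < C₀) (hτ : 0 < τ)
    (ω' : ℤ → ℝ)
    (hmel : ∀ (n m m' σ σ' : ℤ), n ≠ 0 → m ≠ 0 → m' ≠ 0 →
      (σ = 1 ∨ σ = -1) → (σ' = 1 ∨ σ' = -1) → |n| ≠ |m + σ' * m'| →
      C₀ * |(n:ℝ)| ^ (-τ) ≤ |ω * (n:ℝ) + (σ:ℝ) * (ω' m + (σ':ℝ) * ω' m')|) :
    ∀ (nl ml nl1 ml1 : ℤ) (h : ℕ),
      nl ≠ 0 → ml ≠ 0 → nl1 ≠ 0 → ml1 ≠ 0 →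
      nl ≠ nl1 →
      |nl - nl1| ≠ |ml + ml1| → |nl - nl1| ≠ |ml - ml1| →
      abs (|ω * (nl:ℝ)| - ω' ml) ≤ 2 * C₀ / 2^h →
      abs (|ω * (nl1:ℝ)| - ω' ml1) ≤ 2 * C₀ / 2^h →
      ((2:ℝ)^h / 4) ^ (1/τ) ≤ |(nl:ℝ) - (nl1:ℝ)| := by
  intro nl ml nl1 ml1 h _ hml _ hml1 hne hadd hsub hl hl1
  obtain ⟨s, hs, hls⟩ := exists_sign_abs_sub_mul_le hl
  obtain ⟨s1, hs1, hl1s⟩ := exists_sign_abs_sub_mul_le hl1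
  have hσ' := Int.neg_eq_one_or_neg_one (Int.mul_eq_one_or_neg_one hs1 hs)
  have hlower := hmel (nl - nl1) ml ml1 (-s) (-(s1 * s)) (sub_ne_zero.mpr hne) hml hml1
    (Int.neg_eq_one_or_neg_one hs) hσ'
    (Int.ne_abs_add_mul_of_ne_abs_add_of_ne_abs_sub hσ' hadd hsub)
  have hupper := abs_mul_sub_add_neg_mul_le hs hls hl1s
  rw [Int.cast_sub] at hlower
  refine rpow_one_div_le_of_mul_rpow_neg_le hC₀ hτ
    (abs_pos.mpr (sub_ne_zero.mpr (by exact_mod_cast hne))) (by positivity) ?_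
  calc C₀ * |(nl : ℝ) - nl1| ^ (-τ) ≤ _ := hlower
    _ ≤ 2 * (2 * C₀ / 2 ^ h) := hupper
    _ = C₀ / (2 ^ h / 4) := by ring

theorem second_melnikov_separation (ω C₀ τ : ℝ) (hω : 0 < ω) (hC₀ : 0 < C₀) (hτ : 0 < τ)
    (ω' : ℤ → ℝ) (heven : ∀ m : ℤ, ω' (-m) = ω' m)
    (hmel : ∀ (n m m' σ σ' : ℤ), n ≠ 0 → m ≠ 0 → m' ≠ 0 →
      (σ = 1 ∨ σ = -1) → (σ' = 1 ∨ σ' = -1) → |n| ≠ |m + σ' * m'| →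
      C₀ * |(n:ℝ)| ^ (-τ) ≤ |ω * (n:ℝ) + (σ:ℝ) * (ω' m + (σ':ℝ) * ω' m')|) :
    ∀ (nl ml nl1 ml1 : ℤ) (h : ℕ),
      nl ≠ 0 → ml ≠ 0 → nl1 ≠ 0 → ml1 ≠ 0 →
      nl ≠ nl1 →
      |nl - nl1| ≠ |ml + ml1| → |nl - nl1| ≠ |ml - ml1| →
      abs (|ω * (nl:ℝ)| - ω' ml) ≤ 2 * C₀ / 2^h →
      abs (|ω * (nl1:ℝ)| - ω' ml1) ≤ 2 * C₀ / 2^h →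
      ((2:ℝ)^h / 4) ^ (1/τ) ≤ |(nl:ℝ) - (nl1:ℝ)| :=
  second_melnikov_separation_general ω C₀ τ hC₀ hτ ω' hmel
end

section
/- Let ω = √(1−ε) with 0 < ε < 1, 0 < C₀ ≤ 1/2, and suppose nonzero integers n, m with |n| ≠ |m| satisfy |ω²n² − ω̃_m²| < C₀/6 where |ω̃_m − |m|| ≤ C₁ε/|m|. Then |n| > |m| > (3/4)|n|, min{|m|,|n|} > 1/(2ε), and ||ω|n|| − ω̃_m| < C₀/(6|n|). -/
/-!
Write `N = |n|`, `M = |m|` and `w = ω̃_m`. Since `w` is within `C₁ε/M ≤ 1/100` of `M`, the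
resonance condition gives `|(1 - ε)N² - M²| < 1/6`. On the other hand `N² - M²` is a nonzero
integer of the form `(N - M)(N + M)`, so `|N² - M²| ≥ N + M`; the resonance condition excludes the
negative sign, and then `εN² ≥ N + M - 1/6 > N` forces `N > 1/ε`, while `M² > (1 - ε)N² - 1/6`
forces `M > 3N/4`. Finally `ωN + w ≥ N`, and `|ωN - w| (ωN + w) = |ω²N² - w²| < C₀/6`.
-/

theorem Int.abs_add_abs_le_abs_sq_sub_sq {n m : ℤ} (h : |n| ≠ |m|) :
    |n| + |m| ≤ |n ^ 2 - m ^ 2| := by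
  have hfac : n ^ 2 - m ^ 2 = (|n| - |m|) * (|n| + |m|) := by
    rw [← sq_abs n, ← sq_abs m]; ring
  rw [hfac, abs_mul, abs_of_nonneg (by positivity : 0 ≤ |n| + |m|)]
  exact le_mul_of_one_le_left (by positivity) (Int.one_le_abs (sub_ne_zero.mpr h))

theorem abs_sq_sub_sq_le_of_abs_sub_le {w M c : ℝ} (hM : 1 ≤ M) (hc : 0 ≤ c) (hc₁ : c ≤ 1)
    (h : |w - M| ≤ c / M) : |w ^ 2 - M ^ 2| ≤ 3 * c := by
  have hcM : c / M ≤ c := div_le_self hc hM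
  have hcMM : c / M * M = c := div_mul_cancel₀ c (by positivity)
  calc |w ^ 2 - M ^ 2| = |w - M| * |w - M + 2 * M| := by rw [← abs_mul]; ring_nf
    _ ≤ |w - M| * (|w - M| + 2 * M) := by
        gcongr
        exact (abs_add_le _ _).trans_eq (by rw [abs_of_nonneg (by positivity : 0 ≤ 2 * M)])
    _ ≤ c / M * (c / M + 2 * M) := by gcongr
    _ ≤ 3 * c := by nlinarith [abs_nonneg (w - M)]

theorem abs_sub_lt_div_of_abs_sq_sub_sq_lt {a b c N : ℝ} (hN : 0 < N) (hab : N ≤ a + b)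
    (h : |a ^ 2 - b ^ 2| < c) : |a - b| < c / N := by
  rw [lt_div_iff₀ hN]
  calc |a - b| * N ≤ |a - b| * (a + b) := by gcongr
    _ = |a ^ 2 - b ^ 2| := by
        rw [← abs_of_pos (hN.trans_le hab), ← abs_mul]; ring_nf
    _ < c := h

theorem add_le_sq_sub_sq_of_near_resonance {N M ε : ℝ} (hN : 1 ≤ N) (hM : 1 ≤ M) (hε : 0 ≤ ε)
    (hgap : N + M ≤ |N ^ 2 - M ^ 2|) (hres : |(1 - ε) * N ^ 2 - M ^ 2| < 1 / 6) :
    N + M ≤ N ^ 2 - M ^ 2 := by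
  have hlow := (abs_lt.mp hres).1
  refine (le_abs'.mp hgap).resolve_left fun hneg => ?_
  nlinarith [mul_nonneg hε (sq_nonneg N)]

theorem one_lt_mul_of_near_resonance {N M ε : ℝ} (hN : 1 ≤ N) (hM : 1 ≤ M)
    (hsq : N + M ≤ N ^ 2 - M ^ 2) (hres : |(1 - ε) * N ^ 2 - M ^ 2| < 1 / 6) : 1 < ε * N := by
  have hup := (abs_lt.mp hres).2
  nlinarith

theorem three_quarters_lt_of_near_resonance {N M ε : ℝ} (hN : 1 ≤ N) (hM : 0 ≤ M)
    (hε : ε < 1 / 100) (hres : |(1 - ε) * N ^ 2 - M ^ 2| < 1 / 6) : 3 / 4 * N < M := by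
  have hup := (abs_lt.mp hres).2
  nlinarith [mul_le_mul_of_nonneg_right hε.le (sq_nonneg N)]

theorem le_sqrt_one_sub_mul_add {N M w ε : ℝ} (hN : 1 ≤ N) (hε : 0 ≤ ε) (hε₁ : ε < 1 / 100)
    (hM : 3 / 4 * N < M) (hw : M - 1 / 100 ≤ w) : N ≤ √(1 - ε) * N + w := by
  have hω : 1 - ε ≤ √(1 - ε) := Real.le_sqrt_self_iff.mpr (by linarith)
  nlinarith [mul_le_mul_of_nonneg_right hω (by positivity : 0 ≤ N)]

theorem localization_refined_general (C₀ C₁ : ℝ) (hC₀' : C₀ ≤ 1/2) (hC₁ : 0 < C₁) :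
    ∃ ε₀ > (0:ℝ), ∀ ε : ℝ, 0 < ε → ε < ε₀ → ε < 1 →
      ∀ ω' : ℤ → ℝ, (∀ m : ℤ, m ≠ 0 → abs (ω' m - |(m:ℝ)|) ≤ C₁ * ε / |(m:ℝ)|) →
      ∀ n m : ℤ, n ≠ 0 → m ≠ 0 → |n| ≠ |m| →
        |(Real.sqrt (1-ε))^2 * (n:ℝ)^2 - (ω' m)^2| < C₀/6 →
        (|(m:ℝ)| < |(n:ℝ)| ∧ (3/4) * |(n:ℝ)| < |(m:ℝ)|) ∧
        (1/(2*ε) < |(m:ℝ)| ∧ 1/(2*ε) < |(n:ℝ)|) ∧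
        |Real.sqrt (1-ε) * |(n:ℝ)| - ω' m| < C₀ / (6 * |(n:ℝ)|) := by
  refine ⟨min (1/100) (1/(100*C₁)), by positivity, ?_⟩
  intro ε hε hεε₀ hε1 ω' hω' n m hn hm hnm hres
  have hε100 : ε < 1/100 := hεε₀.trans_le (min_le_left _ _)
  have hC₁ε : C₁ * ε ≤ 1/100 := by
    have := hεε₀.trans_le (min_le_right _ _)
    rw [lt_div_iff₀ (by positivity)] at this
    linarith
  have hN : (1:ℝ) ≤ |(n:ℝ)| := by exact_mod_cast Int.one_le_abs hn
  have hM : (1:ℝ) ≤ |(m:ℝ)| := by exact_mod_cast Int.one_le_abs hm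
  rw [Real.sq_sqrt (by linarith), ← sq_abs (n:ℝ)] at hres
  have hw := abs_sq_sub_sq_le_of_abs_sub_le hM (by positivity) (by linarith) (hω' m hm)
  have hres' : |(1-ε) * |(n:ℝ)|^2 - |(m:ℝ)|^2| < 1/6 :=
    (abs_sub_le _ (ω' m ^ 2) _).trans_lt (by linarith)
  have hgap : |(n:ℝ)| + |(m:ℝ)| ≤ |(|(n:ℝ)|^2 - |(m:ℝ)|^2)| := by
    rw [sq_abs, sq_abs]; exact_mod_cast Int.abs_add_abs_le_abs_sq_sub_sq hnm
  have hsq := add_le_sq_sub_sq_of_near_resonance hN hM hε.le hgap hres'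
  have hMN : |(m:ℝ)| < |(n:ℝ)| := by nlinarith
  have hεN := one_lt_mul_of_near_resonance hN hM hsq hres'
  have h34 := three_quarters_lt_of_near_resonance hN (by positivity) hε100 hres'
  have hwM : |(m:ℝ)| - 1/100 ≤ ω' m := by
    linarith [(abs_le.mp (hω' m hm)).1, div_le_self (by positivity : 0 ≤ C₁ * ε) hM]
  have hsum := le_sqrt_one_sub_mul_add hN hε.le hε100 h34 hwM
  refine ⟨⟨hMN, h34⟩, ⟨?_, ?_⟩, ?_⟩
  · rw [div_lt_iff₀ (by positivity)]; nlinarith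
  · rw [div_lt_iff₀ (by positivity)]; nlinarith
  · rw [← div_div]
    refine abs_sub_lt_div_of_abs_sq_sub_sq_lt (by positivity) hsum ?_
    rwa [mul_pow, Real.sq_sqrt (by linarith)]

theorem localization_refined (C₀ C₁ : ℝ) (hC₀ : 0 < C₀) (hC₀' : C₀ ≤ 1/2) (hC₁ : 0 < C₁) :
    ∃ ε₀ > (0:ℝ), ∀ ε : ℝ, 0 < ε → ε < ε₀ → ε < 1 →
      ∀ ω' : ℤ → ℝ, (∀ m : ℤ, m ≠ 0 → abs (ω' m - |(m:ℝ)|) ≤ C₁ * ε / |(m:ℝ)|) →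
      ∀ n m : ℤ, n ≠ 0 → m ≠ 0 → |n| ≠ |m| →
        |(Real.sqrt (1-ε))^2 * (n:ℝ)^2 - (ω' m)^2| < C₀/6 →
        (|(m:ℝ)| < |(n:ℝ)| ∧ (3/4) * |(n:ℝ)| < |(m:ℝ)|) ∧
        (1/(2*ε) < |(m:ℝ)| ∧ 1/(2*ε) < |(n:ℝ)|) ∧
        |Real.sqrt (1-ε) * |(n:ℝ)| - ω' m| < C₀ / (6 * |(n:ℝ)|) :=
  localization_refined_general C₀ C₁ hC₀' hC₁
end
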